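/- Let M = ⟨A | u = v⟩ be a one-relator monoid, r a word compressing u = v, x = [r]_M, and write u = ru', v = rv'. The map φ : T(r) → M_x given by φ(w) = [rw]_M is a surjective monoid homomorphism from (T(r), concatenation) to the local divisor (M_x, ∘), and it induces an isomorphism L ≅ M_x where L = ⟨Δ_r | u' = v'⟩. -/

import Mathlib

/-!
Since `T(r)` is closed under right factors, every word of `T(r)` factors uniquely over the
prefix code `Δ_r`, so `Δ_r* ≅ T(r)`. If a relation step `a·(r u')·b = r·w` is applied to a word
`r·w` with `w ∈ T(r)`, then `a·r = r·q` with `q, b ∈ T(r)`, and the step is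
`r·(q u' b) → r·(q v' b)`: a step of `u' = v'` in `Δ_r*`. Hence the class of `r·w` in `M`
consists of the words `r·w'` with `w' ≡ w` in `L`. Surjectivity onto `M_x` holds because `u` and
`v` both end in `r`, so right divisibility by `r` is invariant under the relation. Both invariance
arguments go through the syntactic congruence of a set of words.
-/

/-- The congruence on a free monoid generated by the single relation `u = v`. -/
def oneRelCon {A : Type*} (u v : FreeMonoid A) : Con (FreeMonoid A) :=
  conGen (fun a b => a = u ∧ b = v)

/-- `T(r) = {w ∈ A* : r·w ∈ A*·r}`. -/
def Tset {A : Type*} (r : FreeMonoid A) : Set (FreeMonoid A) :=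
  {w | ∃ y, r * w = y * r}

/-- `Δ_r`: the prefix code of irreducible elements of `T(r)`. -/
def Irr {A : Type*} (r : FreeMonoid A) : Set (FreeMonoid A) :=
  {w | w ∈ Tset r ∧ w ≠ 1 ∧ ¬ ∃ a b : FreeMonoid A,
        a ∈ Tset r ∧ b ∈ Tset r ∧ a ≠ 1 ∧ b ≠ 1 ∧ w = a * b}

/-- The canonical embedding `Δ_r* → A*`. -/
noncomputable def iotaΔ {A : Type*} (r : FreeMonoid A) :
    FreeMonoid ↥(Irr r) →* FreeMonoid A :=
  FreeMonoid.lift fun b => (b : FreeMonoid A)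

namespace FreeMonoid

variable {α : Type*}

theorem mul_eq_mul_iff {a b c d : FreeMonoid α} :
    a * b = c * d ↔ (∃ e, c = a * e ∧ b = e * d) ∨ ∃ e, a = c * e ∧ d = e * b := by
  simpa only [← toList.injective.eq_iff, toList_mul, toList.surjective.exists] using
    List.append_eq_append_iff

theorem exists_eq_mul_of_mul_eq_mul {r x m z : FreeMonoid α} (h : x * m = z * r)
    (hl : r.length ≤ m.length) : ∃ y, m = y * r := by
  rcases mul_eq_mul_iff.1 h with ⟨e, -, rfl⟩ | ⟨e, -, rfl⟩
  · exact ⟨e, rfl⟩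
  · have he : e = 1 := length_eq_zero.1 (by simp only [length_mul] at hl; omega)
    exact ⟨1, by simp [he]⟩

theorem exists_mul_eq_mul_of_mul_mul_eq {r a t w : FreeMonoid α} (h : a * (r * t) = r * w) :
    ∃ q, a * r = r * q ∧ w = q * t := by
  rw [← mul_assoc] at h
  rcases mul_eq_mul_iff.1 h with ⟨e, hr, rfl⟩ | ⟨e, hq, rfl⟩
  · have hl := congrArg length hr
    simp only [length_mul] at hl
    obtain rfl : a = 1 := length_eq_zero.1 (by omega)
    obtain rfl : e = 1 := length_eq_zero.1 (by omega)
    exact ⟨1, by simp⟩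
  · exact ⟨e, hq, rfl⟩

end FreeMonoid

section FreeGeneration

open FreeMonoid

variable {A : Type*} {r : FreeMonoid A}

theorem one_mem_Tset : (1 : FreeMonoid A) ∈ Tset r := ⟨1, by simp⟩

theorem mul_mem_Tset {a b : FreeMonoid A} (ha : a ∈ Tset r) (hb : b ∈ Tset r) :
    a * b ∈ Tset r := by
  obtain ⟨y, hy⟩ := ha
  obtain ⟨z, hz⟩ := hb
  exact ⟨y * z, by rw [← mul_assoc, hy, mul_assoc, hz, ← mul_assoc]⟩

theorem mem_Tset_of_mul_mem_Tset {a b : FreeMonoid A} (ha : a ∈ Tset r)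
    (hab : a * b ∈ Tset r) : b ∈ Tset r := by
  obtain ⟨y, hy⟩ := ha
  obtain ⟨z, hz⟩ := hab
  refine exists_eq_mul_of_mul_eq_mul (x := y) (z := z) ?_ (by simp [length_mul])
  rw [← mul_assoc, ← hy, mul_assoc, hz]

theorem iotaΔ_of (b : Irr r) : iotaΔ r (of b) = b := rfl

theorem iotaΔ_mem_Tset (s : FreeMonoid (Irr r)) : iotaΔ r s ∈ Tset r := by
  induction s using FreeMonoid.inductionOn' with
  | one => exact one_mem_Tset
  | of_mul b s ih => rw [map_mul]; exact mul_mem_Tset b.2.1 ih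

theorem exists_iotaΔ_eq {w : FreeMonoid A} (hw : w ∈ Tset r) : ∃ s, iotaΔ r s = w := by
  induction h : w.length using Nat.strong_induction_on generalizing w with
  | _ n ih =>
  by_cases h1 : w = 1
  · exact ⟨1, by simp [h1]⟩
  by_cases hsplit : ∃ a b : FreeMonoid A,
      a ∈ Tset r ∧ b ∈ Tset r ∧ a ≠ 1 ∧ b ≠ 1 ∧ w = a * b
  · obtain ⟨a, b, ha, hb, ha1, hb1, rfl⟩ := hsplit
    have hla := mt length_eq_zero.1 ha1
    have hlb := mt length_eq_zero.1 hb1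
    rw [length_mul] at h
    obtain ⟨sa, rfl⟩ := ih _ (by omega) ha rfl
    obtain ⟨sb, rfl⟩ := ih _ (by omega) hb rfl
    exact ⟨sa * sb, map_mul _ _ _⟩
  · exact ⟨of ⟨w, hw, h1, hsplit⟩, rfl⟩

/-- `Δ_r` is a prefix code: if `b` were a proper prefix of `b'`, the remainder would lie in
`T(r)` and split `b'`. -/
theorem Irr.eq_of_mul_eq_mul {b b' X X' : FreeMonoid A} (hb : b ∈ Irr r) (hb' : b' ∈ Irr r)
    (h : b * X = b' * X') : b = b' := by
  wlog hl : b.length ≤ b'.length generalizing b b' X X'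
  · exact (this hb' hb h.symm (by omega)).symm
  rcases mul_eq_mul_iff.1 h with ⟨e, rfl, -⟩ | ⟨e, rfl, -⟩
  · by_contra hne
    have he : e ≠ 1 := by rintro rfl; simp at hne
    exact hb'.2.2 ⟨b, e, hb.1, mem_Tset_of_mul_mem_Tset hb.1 hb'.1, hb.2.1, he, rfl⟩
  · have : e = 1 := length_eq_zero.1 (by simp only [length_mul] at hl; omega)
    simp [this]

theorem iotaΔ_of_mul_ne_one (b : Irr r) (s : FreeMonoid (Irr r)) :
    iotaΔ r (of b * s) ≠ 1 := by
  rw [map_mul, iotaΔ_of]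
  intro h
  have hl := congrArg length h
  rw [length_mul, length_one] at hl
  exact b.2.2.1 (length_eq_zero.1 (by omega))

theorem iotaΔ_injective : Function.Injective (iotaΔ r) := by
  intro s
  induction s using FreeMonoid.inductionOn' with
  | one =>
    intro s' h
    induction s' using FreeMonoid.inductionOn' with
    | one => rfl
    | of_mul b' s' _ => exact absurd h.symm (iotaΔ_of_mul_ne_one b' s')
  | of_mul b s ih =>
    intro s' h
    induction s' using FreeMonoid.inductionOn' with
    | one => exact absurd h (iotaΔ_of_mul_ne_one b s)
    | of_mul b' s' _ =>
      simp only [map_mul, iotaΔ_of] at h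
      obtain rfl : b = b' := Subtype.ext (Irr.eq_of_mul_eq_mul b.2 b'.2 h)
      rw [ih (mul_left_cancel h)]

end FreeGeneration

section Congruence

variable {M N : Type*} [Monoid M] [Monoid N]

/-- The coarsest congruence of which `S` is a union of classes. -/
def syntacticCon (S : Set M) : Con M where
  r x y := ∀ a b, a * x * b ∈ S ↔ a * y * b ∈ S
  iseqv :=
    ⟨fun _ _ _ => Iff.rfl, fun h a b => (h a b).symm, fun h h' a b => (h a b).trans (h' a b)⟩
  mul' {x x' y y'} hx hy a b := by
    have h₁ := hx a (y * b)
    have h₂ := hy (a * x') b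
    simp only [mul_assoc] at h₁ h₂ ⊢
    exact h₁.trans h₂

theorem mem_iff_of_conGen {R : M → M → Prop} {S : Set M}
    (hS : ∀ x y, R x y → ∀ a b, a * x * b ∈ S ↔ a * y * b ∈ S) {z z' : M}
    (h : conGen R z z') : z ∈ S ↔ z' ∈ S := by
  simpa using (Con.conGen_le (c := syntacticCon S)).2 hS h 1 1

/-- Multiplicative because each `r * f t` can be rewritten as `y * r`. -/
def Con.comapMulLeft (c : Con M) (r : M) (f : N →* M) (hf : ∀ t, ∃ y, r * f t = y * r) :
    Con N where
  r t t' := c (r * f t) (r * f t')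
  iseqv := ⟨fun _ => c.refl _, c.symm, c.trans⟩
  mul' {t₁ t₁' t₂ t₂'} h₁ h₂ := by
    obtain ⟨y, hy⟩ := hf t₁
    rw [map_mul f, map_mul f, ← mul_assoc, ← mul_assoc]
    refine c.trans ?_ (c.mul h₁ (c.refl (f t₂')))
    rw [hy, mul_assoc, mul_assoc]
    exact c.mul (c.refl y) h₂

end Congruence

section OneRelator

open FreeMonoid

variable {A : Type*} {r : FreeMonoid A}

theorem oneRelCon_rel (u v : FreeMonoid A) : oneRelCon u v u v := ConGen.Rel.of u v ⟨rfl, rfl⟩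

theorem exists_mul_eq_of_replace {c d a b y : FreeMonoid A} (h : a * (c * r) * b = y * r) :
    ∃ y', a * (d * r) * b = y' * r := by
  obtain ⟨e, he⟩ := exists_eq_mul_of_mul_eq_mul (x := a * c) (m := r * b) (z := y)
    (by rw [← h]; simp only [mul_assoc]) (by simp [length_mul])
  exact ⟨a * d * e, by rw [mul_assoc a, mul_assoc d, he]; simp only [mul_assoc]⟩

theorem mem_Tset_of_oneRelCon {u v p q : FreeMonoid A} (hur : ∃ c, u = c * r)
    (hvr : ∃ d, v = d * r) (h : oneRelCon u v (r * p) (q * r)) : p ∈ Tset r := by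
  obtain ⟨c, rfl⟩ := hur
  obtain ⟨d, rfl⟩ := hvr
  refine (mem_iff_of_conGen (S := {z | ∃ y, z = y * r}) ?_ h).2 ⟨q, rfl⟩
  rintro _ _ ⟨rfl, rfl⟩ a b
  exact ⟨fun ⟨_, hy⟩ => exists_mul_eq_of_replace hy,
    fun ⟨_, hy⟩ => exists_mul_eq_of_replace hy⟩

theorem exists_iotaΔ_of_replace {c : Con (FreeMonoid (Irr r))} {u' v' s : FreeMonoid (Irr r)}
    (huv : c u' v') {a b : FreeMonoid A} (h : a * (r * iotaΔ r u') * b = r * iotaΔ r s) :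
    ∃ s', a * (r * iotaΔ r v') * b = r * iotaΔ r s' ∧ c s s' := by
  obtain ⟨q, haq, hs⟩ := exists_mul_eq_mul_of_mul_mul_eq (a := a) (t := iotaΔ r u' * b)
    (by rw [← h]; simp only [mul_assoc])
  obtain ⟨sq, rfl⟩ := exists_iotaΔ_eq (⟨a, haq.symm⟩ : q ∈ Tset r)
  have hb : b ∈ Tset r := by
    refine mem_Tset_of_mul_mem_Tset (iotaΔ_mem_Tset (sq * u')) ?_
    rw [map_mul, mul_assoc, ← hs]
    exact iotaΔ_mem_Tset s
  obtain ⟨sb, rfl⟩ := exists_iotaΔ_eq hb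
  obtain rfl : s = sq * u' * sb := iotaΔ_injective (by simp only [map_mul, hs, mul_assoc])
  refine ⟨sq * v' * sb, ?_, c.mul (c.mul (c.refl sq) huv) (c.refl sb)⟩
  calc a * (r * iotaΔ r v') * iotaΔ r sb = a * r * (iotaΔ r v' * iotaΔ r sb) := by
        simp only [mul_assoc]
    _ = r * iotaΔ r (sq * v' * sb) := by rw [haq]; simp only [map_mul, mul_assoc]

theorem exists_iotaΔ_of_oneRelCon {u v z : FreeMonoid A} {u' v' s : FreeMonoid (Irr r)}
    (hu : u = r * iotaΔ r u') (hv : v = r * iotaΔ r v') (h : oneRelCon u v (r * iotaΔ r s) z) :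
    ∃ t, z = r * iotaΔ r t ∧ oneRelCon u' v' s t := by
  subst hu hv
  refine (mem_iff_of_conGen (S := {z | ∃ t, z = r * iotaΔ r t ∧ oneRelCon u' v' s t}) ?_ h).1
    ⟨s, rfl, Con.refl _ s⟩
  rintro _ _ ⟨rfl, rfl⟩ a b
  have hL := oneRelCon_rel u' v'
  constructor
  · rintro ⟨t, ht, hst⟩
    obtain ⟨t', ht', htt'⟩ := exists_iotaΔ_of_replace hL ht
    exact ⟨t', ht', Con.trans _ hst htt'⟩
  · rintro ⟨t, ht, hst⟩
    obtain ⟨t', ht', htt'⟩ := exists_iotaΔ_of_replace (Con.symm _ hL) ht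
    exact ⟨t', ht', Con.trans _ hst htt'⟩

theorem oneRelCon_mul_iotaΔ_iff {u v : FreeMonoid A} {u' v' : FreeMonoid (Irr r)}
    (hu : u = r * iotaΔ r u') (hv : v = r * iotaΔ r v') {s s' : FreeMonoid (Irr r)} :
    oneRelCon u v (r * iotaΔ r s) (r * iotaΔ r s') ↔ oneRelCon u' v' s s' := by
  refine ⟨fun h => ?_, fun h => ?_⟩
  · obtain ⟨t, ht, hst⟩ := exists_iotaΔ_of_oneRelCon hu hv h
    rwa [iotaΔ_injective (mul_left_cancel ht)]
  · refine (Con.conGen_le (c := (oneRelCon u v).comapMulLeft r (iotaΔ r) iotaΔ_mem_Tset)).2 ?_ h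
    rintro _ _ ⟨rfl, rfl⟩
    change oneRelCon u v _ _
    rw [← hu, ← hv]
    exact oneRelCon_rel u v

end OneRelator

theorem compression_local_divisor_iso_general {A : Type*} (u v r : FreeMonoid A)
    (hur : ∃ a, u = a * r) (hvr : ∃ a, v = a * r)
    (u' v' : FreeMonoid ↥(Irr r))
    (hu : u = r * iotaΔ r u') (hv : v = r * iotaΔ r v') :
    let c := oneRelCon u v
    let mk := c.mk'
    let x := mk r
    -- φ lands in the local divisor M_x = xM ∩ Mx
    (∀ w ∈ Tset r, mk (r * w) = x * mk w ∧ ∃ a : c.Quotient, mk (r * w) = a * x) ∧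
    -- φ is a homomorphism to (M_x, ∘): φ(w₁w₂) = φ(w₁) ∘ φ(w₂), and φ(ε) = x
    (∀ w₁ ∈ Tset r, ∀ w₂ ∈ Tset r, ∀ a : c.Quotient,
        mk (r * w₁) = a * x → mk (r * (w₁ * w₂)) = a * x * mk w₂) ∧
    mk (r * 1) = x ∧
    -- φ is surjective onto M_x, indeed every element of M_x is φ of a word over Δ_r
    (∀ m : c.Quotient, (∃ a, m = x * a) → (∃ b, m = b * x) →
        ∃ s : FreeMonoid ↥(Irr r), mk (r * iotaΔ r s) = m) ∧
    -- φ factors through L = ⟨Δ_r | u' = v'⟩ as an isomorphism: it identifies exactly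
    -- the pairs identified in L
    (∀ s s' : FreeMonoid ↥(Irr r),
        mk (r * iotaΔ r s) = mk (r * iotaΔ r s') ↔ oneRelCon u' v' s s') := by
  intro c mk x
  refine ⟨fun w hw => ⟨map_mul mk r w, ?_⟩, fun w₁ _ w₂ _ a ha => ?_, by rw [mul_one], ?_,
    fun s s' => c.eq.trans (oneRelCon_mul_iotaΔ_iff hu hv)⟩
  · obtain ⟨y, hy⟩ := hw
    exact ⟨mk y, by rw [hy, map_mul]⟩
  · rw [← mul_assoc, map_mul, ha]
  · rintro m ⟨a, rfl⟩ ⟨b, hb⟩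
    obtain ⟨p, rfl⟩ := c.mk'_surjective a
    obtain ⟨q, rfl⟩ := c.mk'_surjective b
    have hpq : c (r * p) (q * r) := c.eq.1 (by rwa [Con.coe_mul, Con.coe_mul])
    obtain ⟨s, rfl⟩ := exists_iotaΔ_eq (mem_Tset_of_oneRelCon hur hvr hpq)
    exact ⟨s, map_mul mk _ _⟩

/-- Let `M = ⟨A | u = v⟩`, `r` compressing `u = v`, `x = [r]_M`,
`u = r·u'`, `v = r·v'` with `u', v' ∈ Δ_r*`, and `L = ⟨Δ_r | u' = v'⟩`.
The map `φ(w) = [r·w]_M` is a surjective monoid homomorphism from `(T(r), ·)` to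
the local divisor `(M_x, ∘)` (whose multiplication satisfies `(a·x) ∘ (x·b) = a·x·b`
with identity `x`), and it induces an isomorphism `L ≅ M_x`. -/
theorem compression_local_divisor_iso {A : Type*} (u v r : FreeMonoid A) (hr : r ≠ 1)
    (hur : ∃ a, u = a * r) (hvr : ∃ a, v = a * r)
    (u' v' : FreeMonoid ↥(Irr r))
    (hu : u = r * iotaΔ r u') (hv : v = r * iotaΔ r v') :
    let c := oneRelCon u v
    let mk := c.mk'
    let x := mk r
    -- φ lands in the local divisor M_x = xM ∩ Mx
    (∀ w ∈ Tset r, mk (r * w) = x * mk w ∧ ∃ a : c.Quotient, mk (r * w) = a * x) ∧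
    -- φ is a homomorphism to (M_x, ∘): φ(w₁w₂) = φ(w₁) ∘ φ(w₂), and φ(ε) = x
    (∀ w₁ ∈ Tset r, ∀ w₂ ∈ Tset r, ∀ a : c.Quotient,
        mk (r * w₁) = a * x → mk (r * (w₁ * w₂)) = a * x * mk w₂) ∧
    mk (r * 1) = x ∧
    -- φ is surjective onto M_x, indeed every element of M_x is φ of a word over Δ_r
    (∀ m : c.Quotient, (∃ a, m = x * a) → (∃ b, m = b * x) →
        ∃ s : FreeMonoid ↥(Irr r), mk (r * iotaΔ r s) = m) ∧
    -- φ factors through L = ⟨Δ_r | u' = v'⟩ as an isomorphism: it identifies exactly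
    -- the pairs identified in L
    (∀ s s' : FreeMonoid ↥(Irr r),
        mk (r * iotaΔ r s) = mk (r * iotaΔ r s') ↔ oneRelCon u' v' s s') :=
  compression_local_divisor_iso_general u v r hur hvr u' v' hu hv
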